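/- arXiv:1401.1649 — 6 statements merged into one kernel-verified Lean document; each statement's English description precedes it below -/
import Mathlib

section
/- Let 0 < α ≤ 1 be real and set κ_α = min{ α/4, α·8^{−(α+1)}, 1 − 8^{−α} } > 0. Then for all reals d₁ ≥ 1 and d₂ ≥ 1 one has (d₁ + d₂)^α ≥ d₁^α + κ_α · min( d₂^α, d₂ · d₁^{α−1} ). -/
/-!
Split according to the ratio `t = d₂ / d₁`. If `d₂ ≥ 8 d₁`, then `d₁ ^ α ≤ 8 ^ (-α) d₂ ^ α`,
so `(d₁ + d₂) ^ α ≥ d₂ ^ α` already exceeds `d₁ ^ α` by `(1 - 8 ^ (-α)) d₂ ^ α`. If `d₂ ≤ 8 d₁`, the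
chord of the concave function `x ↦ x ^ α` over `[1, 9]` gives `(1 + t) ^ α ≥ 1 + (9 ^ α - 1) t / 8`,
and `9 ^ α ≥ 1 + α log 9 ≥ 1 + α`; scaling by `d₁ ^ α` yields
`(d₁ + d₂) ^ α ≥ d₁ ^ α + (α / 8) d₂ d₁ ^ (α - 1)`.
-/

/-- The constant `κ_α = min { α/4, α·8^{-(α+1)}, 1 - 8^{-α} }`. -/
noncomputable def kappaConst (α : ℝ) : ℝ :=
  min (min (α / 4) (α * (8 : ℝ) ^ (-(α + 1)))) (1 - (8 : ℝ) ^ (-α))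

open Real

lemma kappaConst_pos {α : ℝ} (hα : 0 < α) : 0 < kappaConst α := by
  have h8 : (8 : ℝ) ^ (-α) < 1 := rpow_lt_one_of_one_lt_of_neg (by norm_num) (by linarith)
  unfold kappaConst
  exact lt_min (lt_min (by linarith) (by positivity)) (by linarith)

lemma kappaConst_le_one_sub (α : ℝ) : kappaConst α ≤ 1 - (8 : ℝ) ^ (-α) :=
  min_le_right _ _

lemma kappaConst_le_div_eight {α : ℝ} (hα : 0 ≤ α) : kappaConst α ≤ α / 8 := by
  have h8 : (8 : ℝ) ^ (-(α + 1)) ≤ 8 ^ (-1 : ℝ) :=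
    rpow_le_rpow_of_exponent_le (by norm_num) (by linarith)
  rw [rpow_neg_one] at h8
  calc kappaConst α ≤ α * (8 : ℝ) ^ (-(α + 1)) := (min_le_left _ _).trans (min_le_right _ _)
    _ ≤ α * 8⁻¹ := by gcongr
    _ = α / 8 := by ring

lemma one_add_le_nine_rpow {α : ℝ} (hα : 0 ≤ α) : 1 + α ≤ (9 : ℝ) ^ α := by
  have hlog : 1 ≤ log 9 := by
    rw [le_log_iff_exp_le (by norm_num)]
    linarith [exp_one_lt_d9]
  calc 1 + α ≤ log 9 * α + 1 := by nlinarith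
    _ ≤ (9 : ℝ) ^ α := by rw [rpow_def_of_pos (by norm_num)]; exact add_one_le_exp _

lemma one_add_div_eight_mul_le_one_add_rpow {α t : ℝ} (hα0 : 0 ≤ α) (hα1 : α ≤ 1)
    (ht0 : 0 ≤ t) (ht8 : t ≤ 8) : 1 + α / 8 * t ≤ (1 + t) ^ α := by
  have chord := (concaveOn_rpow hα0 hα1).2 (Set.mem_Ici.2 zero_le_one)
    (Set.mem_Ici.2 (by norm_num : (0 : ℝ) ≤ 9)) (show 0 ≤ 1 - t / 8 by linarith)
    (show 0 ≤ t / 8 by linarith) (sub_add_cancel 1 (t / 8))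
  simp only [smul_eq_mul, one_rpow] at chord
  rw [show (1 - t / 8) * 1 + t / 8 * 9 = 1 + t by ring] at chord
  nlinarith [one_add_le_nine_rpow hα0]

lemma add_rpow_ge_of_eight_mul_le {α d₁ d₂ : ℝ} (hα : 0 ≤ α) (hd₁ : 0 ≤ d₁) (h : 8 * d₁ ≤ d₂) :
    d₁ ^ α + (1 - (8 : ℝ) ^ (-α)) * d₂ ^ α ≤ (d₁ + d₂) ^ α := by
  have hd₂ : 0 ≤ d₂ := by linarith
  have hsmall : d₁ ^ α ≤ (8 : ℝ) ^ (-α) * d₂ ^ α :=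
    calc d₁ ^ α ≤ (d₂ / 8) ^ α := rpow_le_rpow hd₁ (by linarith) hα
      _ = (8 : ℝ) ^ (-α) * d₂ ^ α := by
        rw [div_rpow hd₂ (by norm_num), rpow_neg (by norm_num)]; ring
  have hlarge : d₂ ^ α ≤ (d₁ + d₂) ^ α := rpow_le_rpow hd₂ (by linarith) hα
  linarith

lemma add_rpow_ge_of_le_eight_mul {α d₁ d₂ : ℝ} (hα0 : 0 ≤ α) (hα1 : α ≤ 1) (hd₁ : 0 < d₁)
    (hd₂ : 0 ≤ d₂) (h : d₂ ≤ 8 * d₁) :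
    d₁ ^ α + α / 8 * (d₂ * d₁ ^ (α - 1)) ≤ (d₁ + d₂) ^ α := by
  obtain ⟨t, rfl⟩ : ∃ t, d₂ = d₁ * t := ⟨d₂ / d₁, by field_simp⟩
  have ht0 : 0 ≤ t := nonneg_of_mul_nonneg_right hd₂ hd₁
  have ht8 : t ≤ 8 := le_of_mul_le_mul_left (by linarith) hd₁
  have hsum : (d₁ + d₁ * t) ^ α = d₁ ^ α * (1 + t) ^ α := by
    rw [← mul_rpow hd₁.le (by positivity), mul_one_add]
  have hprod : d₁ * t * d₁ ^ (α - 1) = d₁ ^ α * t := by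
    rw [rpow_sub hd₁, rpow_one]
    field_simp
  rw [hsum, hprod]
  nlinarith [rpow_pos_of_pos hd₁ α, one_add_div_eight_mul_le_one_add_rpow hα0 hα1 ht0 ht8]

/-- Let `0 < α ≤ 1` and set `κ_α = min{α/4, α·8^{−(α+1)}, 1 − 8^{−α}} > 0`. Then for all
reals `d₁ ≥ 1` and `d₂ ≥ 1` one has
`(d₁ + d₂)^α ≥ d₁^α + κ_α · min(d₂^α, d₂·d₁^{α−1})`. -/
theorem statement1 (α : ℝ) (hα0 : 0 < α) (hα1 : α ≤ 1) :
    0 < kappaConst α ∧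
      ∀ d₁ d₂ : ℝ, 1 ≤ d₁ → 1 ≤ d₂ →
        (d₁ + d₂) ^ α ≥ d₁ ^ α + kappaConst α * min (d₂ ^ α) (d₂ * d₁ ^ (α - 1)) := by
  refine ⟨kappaConst_pos hα0, fun d₁ d₂ h₁ h₂ => ?_⟩
  have hd₁ : 0 < d₁ := by linarith
  have hκ := (kappaConst_pos hα0).le
  rcases le_total (8 * d₁) d₂ with h | h
  · calc d₁ ^ α + kappaConst α * min (d₂ ^ α) (d₂ * d₁ ^ (α - 1))
        ≤ d₁ ^ α + (1 - (8 : ℝ) ^ (-α)) * d₂ ^ α := by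
          gcongr
          · exact hκ.trans (kappaConst_le_one_sub α)
          · exact kappaConst_le_one_sub α
          · exact min_le_left _ _
      _ ≤ (d₁ + d₂) ^ α := add_rpow_ge_of_eight_mul_le hα0.le hd₁.le h
  · calc d₁ ^ α + kappaConst α * min (d₂ ^ α) (d₂ * d₁ ^ (α - 1))
        ≤ d₁ ^ α + α / 8 * (d₂ * d₁ ^ (α - 1)) := by
          gcongr
          · exact kappaConst_le_div_eight hα0.le
          · exact min_le_right _ _
      _ ≤ (d₁ + d₂) ^ α := add_rpow_ge_of_le_eight_mul hα0.le hα1 hd₁ (by linarith) h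
end

section
/- Let 0 < α ≤ 1 be real and set κ_α = min{ α/4, α·8^{−(α+1)}, 1 − 8^{−α} } > 0. Then for all reals d₁ ≥ 1, d₂ ≥ 1 and N with d₁ + d₂ ≤ N, one has (d₁ + d₂)^α ≥ d₁^α + κ_α · d₂ · N^{α−1}. -/
/-!
Concavity of `x ↦ x ^ α` puts its graph below the tangent at `s = d₁ + d₂`, which at `x = d₁`
gives `d₁ ^ α ≤ s ^ α - α d₂ s ^ (α - 1)`. Since `α - 1 ≤ 0` and `s ≤ N`, we have
`N ^ (α - 1) ≤ s ^ (α - 1)`, and `κ_α ≤ α / 4 ≤ α` finishes the estimate.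
-/

open Real

lemma kappaConst_le_self {α : ℝ} (hα : 0 ≤ α) : kappaConst α ≤ α :=
  (min_le_left _ _).trans <| (min_le_left _ _).trans (by linarith)

lemma rpow_le_rpow_add_mul_rpow_sub_one_mul_sub {x s p : ℝ} (hx : 0 ≤ x) (hs : 0 < s)
    (hp0 : 0 ≤ p) (hp1 : p ≤ 1) :
    x ^ p ≤ s ^ p + p * s ^ (p - 1) * (x - s) := by
  have hbernoulli : (x / s) ^ p ≤ 1 + p * (x / s - 1) := by
    simpa using rpow_one_add_le_one_add_mul_self (s := x / s - 1)
      (by linarith [div_nonneg hx hs.le]) hp0 hp1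
  have hsp : s ^ p = s ^ (p - 1) * s := by
    rw [← rpow_add_one hs.ne', sub_add_cancel]
  calc x ^ p = (x / s) ^ p * s ^ p := by
        rw [div_rpow hx hs.le, div_mul_cancel₀ _ (rpow_pos_of_pos hs p).ne']
    _ ≤ (1 + p * (x / s - 1)) * s ^ p :=
        mul_le_mul_of_nonneg_right hbernoulli (rpow_nonneg hs.le p)
    _ = s ^ p + p * s ^ (p - 1) * (x - s) := by
        rw [hsp]; field_simp

/-- Let `0 < α ≤ 1` and set `κ_α = min{α/4, α·8^{−(α+1)}, 1 − 8^{−α}} > 0`. Then for all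
reals `d₁ ≥ 1`, `d₂ ≥ 1` and `N` with `d₁ + d₂ ≤ N`, one has
`(d₁ + d₂)^α ≥ d₁^α + κ_α · d₂ · N^{α−1}`. -/
theorem statement2 (α : ℝ) (hα0 : 0 < α) (hα1 : α ≤ 1) :
    0 < kappaConst α ∧
      ∀ d₁ d₂ N : ℝ, 1 ≤ d₁ → 1 ≤ d₂ → d₁ + d₂ ≤ N →
        (d₁ + d₂) ^ α ≥ d₁ ^ α + kappaConst α * d₂ * N ^ (α - 1) := by
  refine ⟨kappaConst_pos hα0, fun d₁ d₂ N h₁ h₂ hN => ?_⟩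
  have hs : 0 < d₁ + d₂ := by linarith
  have htangent :=
    rpow_le_rpow_add_mul_rpow_sub_one_mul_sub (x := d₁) (by linarith) hs hα0.le hα1
  have hNs : N ^ (α - 1) ≤ (d₁ + d₂) ^ (α - 1) := rpow_le_rpow_of_nonpos hs hN (by linarith)
  have hκ : kappaConst α * d₂ ≤ α * d₂ :=
    mul_le_mul_of_nonneg_right (kappaConst_le_self hα0.le) (by linarith : (0 : ℝ) ≤ d₂)
  calc d₁ ^ α + kappaConst α * d₂ * N ^ (α - 1)
      ≤ d₁ ^ α + α * d₂ * (d₁ + d₂) ^ (α - 1) := by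
        gcongr
        exact rpow_nonneg (by linarith) _
    _ ≤ (d₁ + d₂) ^ α := by linarith
end

section
/- Let m and p be integers with 2 ≤ p < m. There exist a sequence (r_i)_{i∈ℕ} of positive real numbers and a sequence (k_i)_{i∈ℕ} of positive integers such that Σ_{i∈ℕ} r_i = 1/8, Σ_{i∈ℕ} r_i^{m−p} · k_i^p < +∞, and Σ_{i∈ℕ} r_i^{m−p} · k_i^{2p} = +∞. -/
open Filter

/-!
Take `r` geometric with ratio `y⁻²`, where `y = 2 ^ p`, normalised to total mass `1/8`, and
`k i = 2 ^ (d * i)` with `d = m - p ≥ 1`. Then `r i ^ d * k i ^ (2 * p)` is a positive constant,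
so the second series diverges, while `r i ^ d * k i ^ p` is geometric with ratio `y⁻ᵈ < 1`.
-/

lemma hasSum_mul_one_sub_mul_geometric {x : ℝ} (hx₀ : 0 ≤ x) (hx₁ : x < 1) (s : ℝ) :
    HasSum (fun i => s * (1 - x) * x ^ i) s := by
  have h := (hasSum_geometric_of_lt_one hx₀ hx₁).mul_left (s * (1 - x))
  rwa [mul_inv_cancel_right₀ (sub_pos.2 hx₁).ne'] at h

section GeometricWeights

variable {K : Type*} [Field K] (c : K) {y : K} (hy : y ≠ 0) (d i : ℕ)
include hy

lemma geometric_pow_mul_pow_sq_eq :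
    (c * (y ^ 2)⁻¹ ^ i) ^ d * (y ^ (d * i)) ^ 2 = c ^ d := by
  have hz : (y ^ (d * i)) ^ 2 ≠ 0 := pow_ne_zero _ (pow_ne_zero _ hy)
  calc _ = c ^ d * (((y ^ (d * i)) ^ 2)⁻¹ * (y ^ (d * i)) ^ 2) := by ring
    _ = c ^ d := by rw [inv_mul_cancel₀ hz, mul_one]

lemma geometric_pow_mul_pow_eq :
    (c * (y ^ 2)⁻¹ ^ i) ^ d * y ^ (d * i) = c ^ d * (y ^ d)⁻¹ ^ i := by
  have hz : y ^ (d * i) ≠ 0 := pow_ne_zero _ hy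
  calc _ = c ^ d * (y ^ (d * i))⁻¹ * ((y ^ (d * i))⁻¹ * y ^ (d * i)) := by ring
    _ = c ^ d * (y ^ d)⁻¹ ^ i := by rw [inv_mul_cancel₀ hz, mul_one]; ring

end GeometricWeights

/-- Let `m`, `p` be integers with `2 ≤ p < m`. There exist a sequence `(r_i)` of positive
reals and a sequence `(k_i)` of positive integers such that `Σ r_i = 1/8`,
`Σ r_i^{m−p}·k_i^p < +∞`, and `Σ r_i^{m−p}·k_i^{2p} = +∞` (partial sums tend to `+∞`). -/
theorem statement4 (m p : ℕ) (hp : 2 ≤ p) (hpm : p < m) :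
    ∃ (r : ℕ → ℝ) (k : ℕ → ℕ),
      (∀ i, 0 < r i) ∧ (∀ i, 1 ≤ k i) ∧
      HasSum r (1 / 8) ∧
      Summable (fun i => r i ^ (m - p) * (k i : ℝ) ^ p) ∧
      Tendsto (fun n => ∑ i ∈ Finset.range n, r i ^ (m - p) * (k i : ℝ) ^ (2 * p))
        atTop atTop := by
  set d := m - p
  set y : ℝ := 2 ^ p
  have hy : 1 < y := one_lt_pow₀ one_lt_two (by omega)
  have hy₀ : y ≠ 0 := by positivity
  have hx₁ : (y ^ 2)⁻¹ < 1 := inv_lt_one_of_one_lt₀ (one_lt_pow₀ hy two_ne_zero)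
  have hc : 0 < 1 / 8 * (1 - (y ^ 2)⁻¹) := mul_pos (by norm_num) (sub_pos.2 hx₁)
  have hk : ∀ i, ((2 ^ (d * i) : ℕ) : ℝ) ^ p = y ^ (d * i) := fun i => by
    push_cast
    ring
  have hk_sq : ∀ i, ((2 ^ (d * i) : ℕ) : ℝ) ^ (2 * p) = (y ^ (d * i)) ^ 2 := fun i => by
    rw [pow_mul', hk]
  refine ⟨fun i => 1 / 8 * (1 - (y ^ 2)⁻¹) * (y ^ 2)⁻¹ ^ i, fun i => 2 ^ (d * i),
    fun i => by positivity, fun i => Nat.one_le_two_pow,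
    hasSum_mul_one_sub_mul_geometric (by positivity) hx₁ _, ?_, ?_⟩
  · have hyd : (y ^ d)⁻¹ < 1 := inv_lt_one_of_one_lt₀ (one_lt_pow₀ hy (by omega))
    simpa only [hk, geometric_pow_mul_pow_eq _ hy₀] using
      (summable_geometric_of_lt_one (by positivity) hyd).mul_left _
  · simp only [hk_sq, geometric_pow_mul_pow_sq_eq _ hy₀, Finset.sum_const, Finset.card_range,
      nsmul_eq_mul]
    exact tendsto_natCast_atTop_atTop.atTop_mul_const (pow_pos hc d)
end

section
/- Let Ω ⊆ ℝ^m be a bounded open set, let (Ω_p)_{p∈P} be a finite family of pairwise disjoint open convex subsets of Ω, and let A ⊆ Ω be a finite set with A ∩ ∂Ω_p = ∅ for every p ∈ P. Then ℒ^α_brbd(A, ∂Ω) ≥ Σ_{p∈P} ℒ^α_brbd(A ∩ Ω_p, ∂Ω_p). -/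
open scoped ENNReal
open scoped Classical

noncomputable section

/-- Points of `ℝ^m` with the Euclidean norm. -/
abbrev Pt (m : ℕ) : Type := EuclideanSpace ℝ (Fin m)

/-- A finite weighted directed graph in `ℝ^m`: a finite vertex set, a finite set of
directed segments `e = (e⁻, e⁺)`, and a multiplicity function. -/
structure BrGraph (m : ℕ) where
  V : Finset (Pt m)
  E : Finset (Pt m × Pt m)
  d : Pt m × Pt m → ℕ

/-- `G` is a weighted directed graph connecting the finite set `A` to the boundary of `Ω`:
`A ⊆ V(G) ⊆ cl Ω`; edges have distinct endpoints in `V(G)`; no edge appears with both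
orientations; multiplicities are `≥ 1`; and the Kirchhoff balance law holds at every
vertex not on `∂Ω`. -/
def BrGraph.IsConn {m : ℕ} (G : BrGraph m) (A : Finset (Pt m)) (Ω : Set (Pt m)) : Prop :=
  A ⊆ G.V ∧
  (G.V : Set (Pt m)) ⊆ closure Ω ∧
  (∀ e ∈ G.E, e.1 ∈ G.V ∧ e.2 ∈ G.V ∧ e.1 ≠ e.2) ∧
  (∀ e ∈ G.E, (e.2, e.1) ∉ G.E) ∧
  (∀ e ∈ G.E, 1 ≤ G.d e) ∧
  ∀ a ∈ G.V, a ∉ frontier Ω →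
    (∑ e ∈ G.E.filter (fun e => e.1 = a), G.d e) =
      (∑ e ∈ G.E.filter (fun e => e.2 = a), G.d e) + (if a ∈ A then 1 else 0)

/-- The cost `W_α(G) = ∑_{e ∈ E(G)} d(e)^α · ℓ(e)` where `ℓ(e) = |e⁺ − e⁻|`. -/
def BrGraph.cost {m : ℕ} (α : ℝ) (G : BrGraph m) : ℝ :=
  ∑ e ∈ G.E, (G.d e : ℝ) ^ α * ‖e.2 - e.1‖

/-- The branched connection `ℒ^α_brbd(A, ∂Ω) = inf { W_α(G) : G ∈ 𝒢(A, ∂Ω) }`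
(valued in `[0, ∞]`, equal to `∞` if no connecting graph exists). -/
def Lbrbd (m : ℕ) (α : ℝ) (A : Finset (Pt m)) (Ω : Set (Pt m)) : ℝ≥0∞ :=
  ⨅ (G : BrGraph m) (_ : G.IsConn A Ω), ENNReal.ofReal (G.cost α)

/-!
Restrict a competitor `G` for `ℒ^α_brbd(A, ∂Ω)` to each `Ω_p`: replace every edge by the smallest
subsegment containing its part inside `Ω_p`, merge parallel segments and cancel opposite ones.
Since `Ω_p` is open, an endpoint of a clipped edge lying in `Ω_p` is an endpoint of the original
edge, so the Kirchhoff law of `G` passes to the result, which therefore competes for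
`ℒ^α_brbd(A ∩ Ω_p, ∂Ω_p)`. Merging does not increase the cost because `t ↦ t^α` is subadditive,
and by convexity and disjointness the clipped pieces of one edge of `G` have total length at most
its length.
-/

open Set Filter Topology Function

lemma natCast_sum_rpow_le {ι : Type*} (t : Finset ι) (n : ι → ℕ) {α : ℝ} (hα0 : 0 < α)
    (hα1 : α ≤ 1) : ((∑ i ∈ t, n i : ℕ) : ℝ) ^ α ≤ ∑ i ∈ t, (n i : ℝ) ^ α :=
  Finset.le_sum_of_subadditive (fun k : ℕ => (k : ℝ) ^ α) (by simp [Real.zero_rpow hα0.ne'])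
    (fun a b => by
      push_cast
      exact Real.rpow_add_le_add_rpow (Nat.cast_nonneg a) (Nat.cast_nonneg b) hα0.le hα1) t n

lemma sum_sSup_sub_sInf_le {ι : Type*} (s : Finset ι) {T : ι → Set ℝ}
    (hconv : ∀ i, Convex ℝ (T i)) (hdisj : Pairwise (Disjoint on T))
    (hsub : ∀ i, T i ⊆ Icc 0 1) :
    ∑ i ∈ s, (sSup (T i) - sInf (T i)) ≤ 1 := by
  have hbdd : ∀ i, BddBelow (T i) ∧ BddAbove (T i) := fun i =>
    ⟨bddBelow_Icc.mono (hsub i), bddAbove_Icc.mono (hsub i)⟩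
  have hIoo : ∀ i, Ioo (sInf (T i)) (sSup (T i)) ⊆ T i := by
    intro i
    rcases (T i).eq_empty_or_nonempty with h | h
    · simp [h]
    · exact IsConnected.Ioo_csInf_csSup_subset ⟨h, (hconv i).ordConnected.isPreconnected⟩
        (hbdd i).1 (hbdd i).2
  have hvol : ∑ i ∈ s, MeasureTheory.volume (Ioo (sInf (T i)) (sSup (T i))) ≤
      MeasureTheory.volume (Icc (0 : ℝ) 1) := by
    rw [← MeasureTheory.measure_biUnion_finset
      (fun i _ j _ hij => (hdisj hij).mono (hIoo i) (hIoo j)) fun _ _ => measurableSet_Ioo]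
    exact MeasureTheory.measure_mono (iUnion₂_subset fun i _ => (hIoo i).trans (hsub i))
  rw [Real.volume_Icc, sub_zero, ENNReal.ofReal_one] at hvol
  simp only [Real.volume_Ioo] at hvol
  rwa [← ENNReal.ofReal_sum_of_nonneg fun i _ =>
    sub_nonneg.2 (Real.sInf_le_sSup _ (hbdd i).1 (hbdd i).2), ENNReal.ofReal_le_one] at hvol

section Clip

variable {E : Type*} [NormedAddCommGroup E] [NormedSpace ℝ E] {S : Set E} {e : E × E}

def timesIn (S : Set E) (e : E × E) : Set ℝ :=
  Icc 0 1 ∩ AffineMap.lineMap e.1 e.2 ⁻¹' S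

/-- The smallest subsegment of `e` containing `e ∩ S`; when `e` misses `S` it is the degenerate
segment `(e.1, e.1)`, since `sInf ∅ = sSup ∅ = 0` in `ℝ`. -/
def clip (S : Set E) (e : E × E) : E × E :=
  (AffineMap.lineMap e.1 e.2 (sInf (timesIn S e)), AffineMap.lineMap e.1 e.2 (sSup (timesIn S e)))

lemma bddBelow_timesIn : BddBelow (timesIn S e) := bddBelow_Icc.mono inter_subset_left

lemma bddAbove_timesIn : BddAbove (timesIn S e) := bddAbove_Icc.mono inter_subset_left

lemma sInf_timesIn_nonneg : 0 ≤ sInf (timesIn S e) := Real.sInf_nonneg fun _ ht => ht.1.1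

lemma sSup_timesIn_le_one : sSup (timesIn S e) ≤ 1 := Real.sSup_le (fun _ ht => ht.1.2) zero_le_one

lemma sInf_le_sSup_timesIn : sInf (timesIn S e) ≤ sSup (timesIn S e) :=
  Real.sInf_le_sSup _ bddBelow_timesIn bddAbove_timesIn

lemma sInf_timesIn_mem_Icc : sInf (timesIn S e) ∈ Icc (0 : ℝ) 1 :=
  ⟨sInf_timesIn_nonneg, sInf_le_sSup_timesIn.trans sSup_timesIn_le_one⟩

lemma sSup_timesIn_mem_Icc : sSup (timesIn S e) ∈ Icc (0 : ℝ) 1 :=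
  ⟨sInf_timesIn_nonneg.trans sInf_le_sSup_timesIn, sSup_timesIn_le_one⟩

lemma sInf_timesIn_eq_zero (hS : IsOpen S) (h : (clip S e).1 ∈ S) : sInf (timesIn S e) = 0 := by
  have hmem : sInf (timesIn S e) ∈ timesIn S e := ⟨sInf_timesIn_mem_Icc, h⟩
  by_contra hne
  have hpos : 0 < sInf (timesIn S e) := sInf_timesIn_nonneg.lt_of_ne' hne
  have hI : Icc 0 1 ∈ 𝓝[<] sInf (timesIn S e) := mem_of_superset (Ioc_mem_nhdsLT hpos)
    (Ioc_subset_Icc_self.trans (Icc_subset_Icc_right sInf_timesIn_mem_Icc.2))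
  have hT : ∀ᶠ t in 𝓝[<] sInf (timesIn S e), t ∈ timesIn S e :=
    inter_mem hI (nhdsWithin_le_nhds ((hS.preimage AffineMap.lineMap_continuous).mem_nhds h))
  obtain ⟨t, ht, hlt⟩ := (hT.and self_mem_nhdsWithin).exists
  exact (csInf_le bddBelow_timesIn ht).not_gt hlt

lemma sSup_timesIn_eq_one (hS : IsOpen S) (h : (clip S e).2 ∈ S) : sSup (timesIn S e) = 1 := by
  have hmem : sSup (timesIn S e) ∈ timesIn S e := ⟨sSup_timesIn_mem_Icc, h⟩
  by_contra hne
  have hlt1 : sSup (timesIn S e) < 1 := sSup_timesIn_le_one.lt_of_ne hne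
  have hI : Icc 0 1 ∈ 𝓝[>] sSup (timesIn S e) := mem_of_superset (Ico_mem_nhdsGT hlt1)
    (Ico_subset_Icc_self.trans (Icc_subset_Icc_left sSup_timesIn_mem_Icc.1))
  have hT : ∀ᶠ t in 𝓝[>] sSup (timesIn S e), t ∈ timesIn S e :=
    inter_mem hI (nhdsWithin_le_nhds ((hS.preimage AffineMap.lineMap_continuous).mem_nhds h))
  obtain ⟨t, ht, hlt⟩ := (hT.and self_mem_nhdsWithin).exists
  exact (le_csSup bddAbove_timesIn ht).not_gt hlt

lemma clip_fst_eq_iff (hS : IsOpen S) {v : E} (hv : v ∈ S) : (clip S e).1 = v ↔ e.1 = v := by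
  constructor
  · rintro rfl
    simp only [clip, sInf_timesIn_eq_zero hS hv, AffineMap.lineMap_apply_zero]
  · rintro rfl
    have h0 : (0 : ℝ) ∈ timesIn S e := ⟨left_mem_Icc.2 zero_le_one, by simpa using hv⟩
    simp only [clip, le_antisymm (csInf_le bddBelow_timesIn h0) sInf_timesIn_nonneg,
      AffineMap.lineMap_apply_zero]

lemma clip_snd_eq_iff (hS : IsOpen S) {v : E} (hv : v ∈ S) : (clip S e).2 = v ↔ e.2 = v := by
  constructor
  · rintro rfl
    simp only [clip, sSup_timesIn_eq_one hS hv, AffineMap.lineMap_apply_one]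
  · rintro rfl
    have h1 : (1 : ℝ) ∈ timesIn S e := ⟨right_mem_Icc.2 zero_le_one, by simpa using hv⟩
    simp only [clip, le_antisymm sSup_timesIn_le_one (le_csSup bddAbove_timesIn h1),
      AffineMap.lineMap_apply_one]

lemma clip_mem_closure (h : (clip S e).1 ≠ (clip S e).2) :
    (clip S e).1 ∈ closure S ∧ (clip S e).2 ∈ closure S := by
  have hne : (timesIn S e).Nonempty := by
    contrapose! h
    simp [clip, h]
  dsimp only [clip]
  have hmaps : MapsTo (AffineMap.lineMap e.1 e.2) (timesIn S e) S := fun _ ht => ht.2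
  exact ⟨map_mem_closure AffineMap.lineMap_continuous (csInf_mem_closure hne bddBelow_timesIn)
      hmaps,
    map_mem_closure AffineMap.lineMap_continuous (csSup_mem_closure hne bddAbove_timesIn) hmaps⟩

lemma norm_clip :
    ‖(clip S e).2 - (clip S e).1‖ = (sSup (timesIn S e) - sInf (timesIn S e)) * ‖e.2 - e.1‖ := by
  rw [← dist_eq_norm, ← dist_eq_norm, clip, dist_lineMap_lineMap, Real.dist_eq,
    abs_of_nonneg (sub_nonneg.2 sInf_le_sSup_timesIn), dist_comm]

lemma sum_norm_clip_le {ι : Type*} (s : Finset ι) {Ωp : ι → Set E}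
    (hconv : ∀ p, Convex ℝ (Ωp p)) (hdisj : Pairwise (Disjoint on Ωp)) (e : E × E) :
    ∑ p ∈ s, ‖(clip (Ωp p) e).2 - (clip (Ωp p) e).1‖ ≤ ‖e.2 - e.1‖ := by
  simp only [norm_clip, ← Finset.sum_mul]
  refine mul_le_of_le_one_left (norm_nonneg _) (sum_sSup_sub_sInf_le s (fun p => ?_)
    (fun p q hpq => ?_) fun p => inter_subset_left)
  · exact (convex_Icc 0 1).inter ((hconv p).affine_preimage _)
  · exact ((hdisj hpq).preimage _).mono inter_subset_right inter_subset_right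

end Clip

section NetGraph

variable {m : ℕ}

def incidence (f : Pt m × Pt m) (v : Pt m) : ℤ :=
  (if f.1 = v then 1 else 0) - (if f.2 = v then 1 else 0)

def netFlux {κ : Type*} (s : Finset κ) (γ : κ → Pt m × Pt m) (w : κ → ℕ) (v : Pt m) : ℤ :=
  ∑ k ∈ s, (w k : ℤ) * incidence (γ k) v

lemma incidence_swap (f : Pt m × Pt m) (v : Pt m) : incidence f.swap v = -incidence f v := by
  simp only [incidence, Prod.fst_swap, Prod.snd_swap]
  ring

lemma sum_mul_incidence_eq_zero {F : Finset (Pt m × Pt m)} (hF : ∀ f ∈ F, f.swap ∈ F)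
    {c : Pt m × Pt m → ℤ} (hc : ∀ f, c f.swap = c f) (v : Pt m) :
    ∑ f ∈ F, c f * incidence f v = 0 := by
  have h : ∑ f ∈ F, c f * incidence f v = ∑ f ∈ F, c f.swap * incidence f.swap v :=
    Finset.sum_nbij' Prod.swap Prod.swap hF hF (by simp) (by simp) (by simp)
  simp only [hc, incidence_swap, mul_neg, Finset.sum_neg_distrib] at h
  linarith

lemma kirchhoff_iff_netFlux_eq (E : Finset (Pt m × Pt m)) (d : Pt m × Pt m → ℕ) (v : Pt m) (c : ℕ) :
    ∑ e ∈ E with e.1 = v, d e = ∑ e ∈ E with e.2 = v, d e + c ↔ netFlux E id d v = c := by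
  have h : netFlux E id d v =
      ∑ e ∈ E with e.1 = v, (d e : ℤ) - ∑ e ∈ E with e.2 = v, (d e : ℤ) := by
    simp only [netFlux, incidence, id, mul_sub, mul_ite, mul_one, mul_zero, Finset.sum_sub_distrib,
      Finset.sum_ite, Finset.sum_const_zero, add_zero]
  rw [h, ← Nat.cast_sum, ← Nat.cast_sum]
  omega

lemma BrGraph.IsConn.netFlux_eq {G : BrGraph m} {A : Finset (Pt m)} {Ω : Set (Pt m)}
    (hG : G.IsConn A Ω) {v : Pt m} (hv : v ∉ frontier Ω) :
    netFlux G.E id G.d v = if v ∈ A then 1 else 0 := by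
  obtain ⟨hAV, -, hEV, -, -, hkir⟩ := hG
  by_cases hvV : v ∈ G.V
  · exact_mod_cast (kirchhoff_iff_netFlux_eq _ _ _ _).1 (hkir v hvV hv)
  · rw [if_neg fun hvA => hvV (hAV hvA)]
    refine Finset.sum_eq_zero fun e he => ?_
    have h1 : e.1 ≠ v := fun h => hvV (h ▸ (hEV e he).1)
    have h2 : e.2 ≠ v := fun h => hvV (h ▸ (hEV e he).2.1)
    simp [incidence, h1, h2]

variable {κ : Type*} (s : Finset κ) (γ : κ → Pt m × Pt m) (w : κ → ℕ)

def mergedWeight (f : Pt m × Pt m) : ℕ := ∑ k ∈ s with γ k = f, w k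

def netWeight (f : Pt m × Pt m) : ℕ := mergedWeight s γ w f - mergedWeight s γ w f.swap

def netEdges : Finset (Pt m × Pt m) := (s.image γ).filter fun f => 0 < netWeight s γ w f

def netGraph (A : Finset (Pt m)) : BrGraph m where
  V := (netEdges s γ w).image Prod.fst ∪ (netEdges s γ w).image Prod.snd ∪ A
  E := netEdges s γ w
  d := netWeight s γ w

variable {s γ w}

lemma mergedWeight_eq_zero {f : Pt m × Pt m} (hf : f ∉ s.image γ) : mergedWeight s γ w f = 0 :=
  Finset.sum_eq_zero fun _ hk => absurd ((Finset.mem_filter.1 hk).2 ▸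
    Finset.mem_image_of_mem γ (Finset.mem_filter.1 hk).1) hf

lemma netWeight_eq_zero_of_notMem {f : Pt m × Pt m} (hf : f ∉ netEdges s γ w) :
    netWeight s γ w f = 0 := by
  by_cases hfI : f ∈ s.image γ
  · simpa [netEdges, hfI] using hf
  · simp [netWeight, mergedWeight_eq_zero hfI]

lemma fst_ne_snd_of_mem_netEdges {f : Pt m × Pt m} (hf : f ∈ netEdges s γ w) : f.1 ≠ f.2 := by
  intro h
  have hpos := (Finset.mem_filter.1 hf).2
  rw [netWeight, show f.swap = f from Prod.ext h.symm h] at hpos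
  omega

lemma swap_notMem_netEdges {f : Pt m × Pt m} (hf : f ∈ netEdges s γ w) :
    f.swap ∉ netEdges s γ w := by
  intro hf'
  have h1 := (Finset.mem_filter.1 hf).2
  have h2 := (Finset.mem_filter.1 hf').2
  rw [netWeight, Prod.swap_swap] at h2
  rw [netWeight] at h1
  omega

lemma netFlux_netGraph (A : Finset (Pt m)) (v : Pt m) :
    netFlux (netGraph s γ w A).E id (netGraph s γ w A).d v = netFlux s γ w v := by
  set I := s.image γ
  set F := I ∪ I.image Prod.swap
  have hF : ∀ f ∈ F, f.swap ∈ F := by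
    intro f hf
    rcases Finset.mem_union.1 hf with h | h
    · exact Finset.mem_union_right _ (Finset.mem_image_of_mem _ h)
    · obtain ⟨g, hg, rfl⟩ := Finset.mem_image.1 h
      exact Finset.mem_union_left _ (by simpa using hg)
  have hmerged : ∀ f, (netWeight s γ w f : ℤ) =
      mergedWeight s γ w f - min (mergedWeight s γ w f : ℤ) (mergedWeight s γ w f.swap) := by
    intro f
    simp only [netWeight]
    omega
  have hsymm : ∑ f ∈ F, (min (mergedWeight s γ w f) (mergedWeight s γ w f.swap) : ℤ) *
      incidence f v = 0 :=
    sum_mul_incidence_eq_zero hF (fun f => by rw [Prod.swap_swap, min_comm]) v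
  calc netFlux (netEdges s γ w) id (netWeight s γ w) v
      = ∑ f ∈ F, (netWeight s γ w f : ℤ) * incidence f v :=
        Finset.sum_subset ((Finset.filter_subset _ _).trans Finset.subset_union_left)
          fun f _ hf => by simp [netWeight_eq_zero_of_notMem hf]
    _ = ∑ f ∈ F, (mergedWeight s γ w f : ℤ) * incidence f v := by
        simp only [hmerged, sub_mul, Finset.sum_sub_distrib]
        rw [hsymm, sub_zero]
    _ = ∑ f ∈ I, (mergedWeight s γ w f : ℤ) * incidence f v :=
        (Finset.sum_subset Finset.subset_union_left
          fun f _ hf => by simp [mergedWeight_eq_zero hf]).symm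
    _ = netFlux s γ w v := by
        refine Finset.sum_image' _ fun k _ => ?_
        simp only [mergedWeight, Nat.cast_sum, Finset.sum_mul]
        exact Finset.sum_congr rfl fun j hj => by rw [(Finset.mem_filter.1 hj).2]

lemma cost_netGraph_le (A : Finset (Pt m)) {α : ℝ} (hα0 : 0 < α) (hα1 : α ≤ 1) :
    (netGraph s γ w A).cost α ≤ ∑ k ∈ s, (w k : ℝ) ^ α * ‖(γ k).2 - (γ k).1‖ := by
  calc (netGraph s γ w A).cost α
      ≤ ∑ f ∈ s.image γ, (mergedWeight s γ w f : ℝ) ^ α * ‖f.2 - f.1‖ := by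
        refine (Finset.sum_le_sum fun f _ => ?_).trans
          (Finset.sum_le_sum_of_subset_of_nonneg (Finset.filter_subset _ _)
            fun f _ _ => by positivity)
        gcongr
        exact Nat.sub_le _ _
    _ ≤ ∑ f ∈ s.image γ, ∑ k ∈ s with γ k = f, (w k : ℝ) ^ α * ‖(γ k).2 - (γ k).1‖ := by
        refine Finset.sum_le_sum fun f _ => ?_
        calc (mergedWeight s γ w f : ℝ) ^ α * ‖f.2 - f.1‖
            ≤ (∑ k ∈ s with γ k = f, (w k : ℝ) ^ α) * ‖f.2 - f.1‖ := by
              gcongr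
              exact natCast_sum_rpow_le _ _ hα0 hα1
          _ = _ := by
              rw [Finset.sum_mul]
              exact Finset.sum_congr rfl fun k hk => by rw [(Finset.mem_filter.1 hk).2]
    _ = _ := Finset.sum_fiberwise_of_maps_to (fun k hk => Finset.mem_image_of_mem γ hk) _

lemma isConn_netGraph {A : Finset (Pt m)} {S : Set (Pt m)} (hA : (A : Set (Pt m)) ⊆ closure S)
    (hγ : ∀ k ∈ s, (γ k).1 ≠ (γ k).2 → (γ k).1 ∈ closure S ∧ (γ k).2 ∈ closure S)
    (hflux : ∀ v ∈ interior S, netFlux s γ w v = if v ∈ A then 1 else 0) :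
    (netGraph s γ w A).IsConn A S := by
  have hE : ∀ f ∈ netEdges s γ w, f.1 ∈ closure S ∧ f.2 ∈ closure S := by
    intro f hf
    obtain ⟨k, hk, rfl⟩ := Finset.mem_image.1 (Finset.mem_filter.1 hf).1
    exact hγ k hk (fst_ne_snd_of_mem_netEdges hf)
  have hV : ((netGraph s γ w A).V : Set (Pt m)) ⊆ closure S := by
    intro x hx
    simp only [netGraph, Finset.coe_union, Finset.coe_image, mem_union, mem_image,
      Finset.mem_coe] at hx
    rcases hx with (⟨f, hf, rfl⟩ | ⟨f, hf, rfl⟩) | hx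
    exacts [(hE f hf).1, (hE f hf).2, hA hx]
  refine ⟨Finset.subset_union_right, hV, fun f hf => ⟨?_, ?_, fst_ne_snd_of_mem_netEdges hf⟩,
    fun f hf => swap_notMem_netEdges hf, fun f hf => (Finset.mem_filter.1 hf).2,
    fun v hv hfr => ?_⟩
  · exact Finset.mem_union_left _ (Finset.mem_union_left _ (Finset.mem_image_of_mem _ hf))
  · exact Finset.mem_union_left _ (Finset.mem_union_right _ (Finset.mem_image_of_mem _ hf))
  · have hvS : v ∈ interior S := closure_sdiff_frontier S ▸ ⟨hV hv, hfr⟩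
    refine (kirchhoff_iff_netFlux_eq _ _ _ _).2 ?_
    rw [netFlux_netGraph, hflux v hvS]
    split_ifs <;> rfl

end NetGraph

section ClippedGraph

variable {m : ℕ}

lemma netFlux_clip {S : Set (Pt m)} (hS : IsOpen S) (E : Finset (Pt m × Pt m))
    (d : Pt m × Pt m → ℕ) {v : Pt m} (hv : v ∈ S) :
    netFlux E (clip S) d v = netFlux E id d v := by
  simp only [netFlux, incidence, clip_fst_eq_iff hS hv, clip_snd_eq_iff hS hv, id]

lemma isConn_netGraph_clip {G : BrGraph m} {A AS : Finset (Pt m)} {Ω S : Set (Pt m)}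
    (hΩ : IsOpen Ω) (hS : IsOpen S) (hSΩ : S ⊆ Ω) (hG : G.IsConn A Ω)
    (hAS : (AS : Set (Pt m)) = (A : Set (Pt m)) ∩ S) :
    (netGraph G.E (clip S) G.d AS).IsConn AS S := by
  refine isConn_netGraph (fun x hx => subset_closure (hAS ▸ hx).2)
    (fun e _ he => clip_mem_closure he) fun v hv => ?_
  rw [hS.interior_eq] at hv
  have hvΩ : v ∉ frontier Ω := fun h => h.2 (by rw [hΩ.interior_eq]; exact hSΩ hv)
  have hvA : v ∈ AS ↔ v ∈ A := by
    simpa [hv] using congrArg (v ∈ ·) hAS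
  rw [netFlux_clip hS _ _ hv, hG.netFlux_eq hvΩ]
  simp only [hvA]

lemma sum_cost_netGraph_clip_le {ι : Type*} [Fintype ι] {Ωp : ι → Set (Pt m)}
    (hconv : ∀ p, Convex ℝ (Ωp p)) (hdisj : Pairwise (Disjoint on Ωp)) (G : BrGraph m)
    (Ap : ι → Finset (Pt m)) {α : ℝ} (hα0 : 0 < α) (hα1 : α ≤ 1) :
    ∑ p, (netGraph G.E (clip (Ωp p)) G.d (Ap p)).cost α ≤ G.cost α :=
  calc ∑ p, (netGraph G.E (clip (Ωp p)) G.d (Ap p)).cost α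
      ≤ ∑ p, ∑ e ∈ G.E, (G.d e : ℝ) ^ α * ‖(clip (Ωp p) e).2 - (clip (Ωp p) e).1‖ :=
        Finset.sum_le_sum fun p _ => cost_netGraph_le _ hα0 hα1
    _ = ∑ e ∈ G.E, (G.d e : ℝ) ^ α * ∑ p, ‖(clip (Ωp p) e).2 - (clip (Ωp p) e).1‖ := by
        rw [Finset.sum_comm]
        simp only [Finset.mul_sum]
    _ ≤ G.cost α := Finset.sum_le_sum fun e _ =>
        mul_le_mul_of_nonneg_left (sum_norm_clip_le _ hconv hdisj e) (by positivity)

end ClippedGraph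

lemma BrGraph.cost_nonneg {m : ℕ} (G : BrGraph m) (α : ℝ) : 0 ≤ G.cost α :=
  Finset.sum_nonneg fun _ _ => by positivity

theorem statement5_general (m : ℕ) (α : ℝ) (hα0 : 0 < α) (hα1 : α ≤ 1)
    (Ω : Set (Pt m)) (hΩo : IsOpen Ω)
    (ι : Type) [Fintype ι] (Ωp : ι → Set (Pt m))
    (hsub : ∀ p, Ωp p ⊆ Ω) (hopen : ∀ p, IsOpen (Ωp p)) (hconv : ∀ p, Convex ℝ (Ωp p))
    (hdisj : ∀ p q, p ≠ q → Disjoint (Ωp p) (Ωp q))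
    (A : Finset (Pt m))
    (Ap : ι → Finset (Pt m)) (hAp : ∀ p, (Ap p : Set (Pt m)) = (A : Set (Pt m)) ∩ Ωp p) :
    ∑ p, Lbrbd m α (Ap p) (Ωp p) ≤ Lbrbd m α A Ω := by
  refine le_iInf₂ fun G hG => ?_
  calc ∑ p, Lbrbd m α (Ap p) (Ωp p)
      ≤ ∑ p, ENNReal.ofReal ((netGraph G.E (clip (Ωp p)) G.d (Ap p)).cost α) :=
        Finset.sum_le_sum fun p _ =>
          iInf₂_le (netGraph G.E (clip (Ωp p)) G.d (Ap p))
            (isConn_netGraph_clip hΩo (hopen p) (hsub p) hG (hAp p))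
    _ = ENNReal.ofReal (∑ p, (netGraph G.E (clip (Ωp p)) G.d (Ap p)).cost α) :=
        (ENNReal.ofReal_sum_of_nonneg fun p _ => BrGraph.cost_nonneg _ α).symm
    _ ≤ ENNReal.ofReal (G.cost α) :=
        ENNReal.ofReal_le_ofReal (sum_cost_netGraph_clip_le hconv hdisj G Ap hα0 hα1)

/-- If `(Ω_p)_{p∈P}` is a finite family of pairwise disjoint open convex subsets of a
bounded open set `Ω ⊆ ℝ^m` and `A ⊆ Ω` is finite with `A ∩ ∂Ω_p = ∅` for every `p`, then
`ℒ^α_brbd(A, ∂Ω) ≥ Σ_p ℒ^α_brbd(A ∩ Ω_p, ∂Ω_p)`. -/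
theorem statement5 (m : ℕ) (α : ℝ) (hα0 : 0 < α) (hα1 : α ≤ 1)
    (Ω : Set (Pt m)) (hΩo : IsOpen Ω) (hΩb : Bornology.IsBounded Ω)
    (ι : Type) [Fintype ι] (Ωp : ι → Set (Pt m))
    (hsub : ∀ p, Ωp p ⊆ Ω) (hopen : ∀ p, IsOpen (Ωp p)) (hconv : ∀ p, Convex ℝ (Ωp p))
    (hdisj : ∀ p q, p ≠ q → Disjoint (Ωp p) (Ωp q))
    (A : Finset (Pt m)) (hA : (A : Set (Pt m)) ⊆ Ω)
    (hAfr : ∀ p, (A : Set (Pt m)) ∩ frontier (Ωp p) = ∅)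
    (Ap : ι → Finset (Pt m)) (hAp : ∀ p, (Ap p : Set (Pt m)) = (A : Set (Pt m)) ∩ Ωp p) :
    ∑ p, Lbrbd m α (Ap p) (Ωp p) ≤ Lbrbd m α A Ω :=
  statement5_general m α hα0 hα1 Ω hΩo ι Ωp hsub hopen hconv hdisj A Ap hAp

end
end

section
/- Let Ω ⊆ ℝ^m be a bounded open set, A ⊆ Ω a finite set, and G ∈ 𝒢(A, ∂Ω) with multiplicity function d_G. Then for each a ∈ A there exists a finite sequence of distinct points a = b₁^a, b₂^a, …, b_{q_a}^a with b_{q_a}^a ∈ ∂Ω and [b_i^a, b_{i+1}^a] ∈ E(G) for every i, and there exists a weighted graph T₀ ∈ 𝒢(∅, ∂Ω) with E(T₀) ⊆ E(G), such that for every edge e ∈ E(G): d_G(e) = d_{T₀}(e) + #{ a ∈ A : e = [b_i^a, b_{i+1}^a] for some i }, where d_{T₀}(e) is set to 0 when e ∉ E(T₀). -/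
open scoped ENNReal
open scoped Classical

noncomputable section

/-!
Induction on `#A`. From a point `a ∈ A` some vertex of `∂Ω` is reachable along edges of `G`:
otherwise the set `S` of vertices reachable from `a` is closed under outgoing edges, so the
total outflow of `S` is at most its total inflow, while summing Kirchhoff's law over `S`
makes the outflow exceed the inflow by `#(A ∩ S) ≥ 1`. Shortcutting a walk from `a` to `∂Ω`
gives a simple path, and lowering by one the multiplicity of each of its edges yields a graph in
`𝒢(A \ {a}, ∂Ω)`, to which the induction hypothesis applies.
-/

open Finset Function Relation

section Paths

variable {α : Type*}

lemma exists_injOn_chain_of_reflTransGen {r : α → α → Prop} {a v : α}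
    (h : ReflTransGen r a v) :
    ∃ (n : ℕ) (b : ℕ → α), b 0 = a ∧ b n = v ∧ (∀ i < n, r (b i) (b (i + 1))) ∧
      Set.InjOn b (Set.Iic n) := by
  induction h using ReflTransGen.head_induction_on with
  | refl => exact ⟨0, fun _ => v, rfl, rfl, by simp, fun i hi j hj _ => by simp_all⟩
  | @head a c hac _ ih =>
    obtain ⟨n, b, hb0, hbn, hr, hinj⟩ := ih
    by_cases hmem : ∃ k ≤ n, b k = a
    · -- `a` already lies on the path: keep its tail from `a` on.
      obtain ⟨k, hk, hbk⟩ := hmem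
      refine ⟨n - k, fun i => b (i + k), by simpa, by simpa [Nat.sub_add_cancel hk], ?_, ?_⟩
      · intro i hi
        simpa only [add_right_comm] using hr (i + k) (by omega)
      · intro i hi j hj hij
        simp only [Set.mem_Iic] at hi hj
        have := hinj (show i + k ≤ n by omega) (show j + k ≤ n by omega) hij
        omega
    · push Not at hmem
      refine ⟨n + 1, fun i => if i = 0 then a else b (i - 1), by simp, by simpa, ?_, ?_⟩
      · rintro (_ | i) hi
        · simpa [hb0] using hac
        · simpa using hr i (by omega)
      · rintro (_ | i) hi (_ | j) hj hij <;> simp only [Set.mem_Iic] at hi hj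
        · rfl
        · exact absurd hij.symm (by simpa using hmem j (by omega))
        · exact absurd hij (by simpa using hmem i (by omega))
        · simpa using hinj (show i ≤ n by omega) (show j ≤ n by omega) (by simpa using hij)

variable [DecidableEq α]

def pathEdges (b : ℕ → α) (n : ℕ) : Finset (α × α) :=
  (range n).image fun i => (b i, b (i + 1))

lemma mem_pathEdges {b : ℕ → α} {n : ℕ} {e : α × α} :
    e ∈ pathEdges b n ↔ ∃ i < n, e = (b i, b (i + 1)) := by
  simp [pathEdges, eq_comm]

lemma pathEdges_subset {b : ℕ → α} {n : ℕ} {E : Finset (α × α)}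
    (hE : ∀ i < n, (b i, b (i + 1)) ∈ E) : pathEdges b n ⊆ E := fun e he => by
  obtain ⟨i, hi, rfl⟩ := mem_pathEdges.1 he
  exact hE i hi

lemma card_filter_pathEdges {b : ℕ → α} {n : ℕ} (hinj : Set.InjOn b (Set.Iic n))
    (p : α × α → α) (v : α) :
    #{e ∈ pathEdges b n | p e = v} = #{i ∈ range n | p (b i, b (i + 1)) = v} := by
  rw [pathEdges, filter_image, card_image_of_injOn]
  intro i hi j hj hij
  simp only [coe_filter, mem_range, Set.mem_ofPred_eq] at hi hj
  exact hinj (show i ≤ n by omega) (show j ≤ n by omega) (congrArg Prod.fst hij)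

/-- Along a path every vertex other than its endpoints is left as often as it is entered. -/
lemma card_filter_range_add_ite (b : ℕ → α) (n : ℕ) (v : α) :
    #{i ∈ range n | b i = v} + (if b n = v then 1 else 0) =
      #{i ∈ range n | b (i + 1) = v} + (if b 0 = v then 1 else 0) := by
  rw [card_filter, card_filter, ← sum_range_succ (fun i => if b i = v then 1 else 0),
    sum_range_succ']

end Paths

namespace BrGraph

variable {m : ℕ} {Ω : Set (Pt m)} {A : Finset (Pt m)} {G : BrGraph m} {a : Pt m}

def mult (G : BrGraph m) (e : Pt m × Pt m) : ℕ := if e ∈ G.E then G.d e else 0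

def eraseEdges (G : BrGraph m) (P : Finset (Pt m × Pt m)) : BrGraph m where
  V := G.V
  E := {e ∈ G.E | G.d e - (if e ∈ P then 1 else 0) ≠ 0}
  d e := G.d e - if e ∈ P then 1 else 0

lemma eraseEdges_E_subset (P : Finset (Pt m × Pt m)) : (G.eraseEdges P).E ⊆ G.E :=
  filter_subset _ _

variable {P : Finset (Pt m × Pt m)}

lemma mult_eraseEdges_add (hP : P ⊆ G.E) (hd : ∀ e ∈ G.E, 1 ≤ G.d e) (e : Pt m × Pt m) :
    (G.eraseEdges P).mult e + (if e ∈ P then 1 else 0) = G.mult e := by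
  have hde := hd e
  have hPe : e ∈ P → e ∈ G.E := @hP e
  simp only [mult, eraseEdges, mem_filter]
  split_ifs <;> grind

lemma sum_filter_eraseEdges_add (hP : P ⊆ G.E) (hd : ∀ e ∈ G.E, 1 ≤ G.d e)
    (p : Pt m × Pt m → Pt m) (v : Pt m) :
    ∑ e ∈ (G.eraseEdges P).E with p e = v, (G.eraseEdges P).d e + #{e ∈ P | p e = v} =
      ∑ e ∈ G.E with p e = v, G.d e := by
  have hP' : {e ∈ P | p e = v} = {e ∈ {e ∈ G.E | p e = v} | e ∈ P} := by
    ext e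
    simp only [mem_filter]
    exact ⟨fun h => ⟨⟨hP h.1, h.2⟩, h.1⟩, fun h => ⟨h.2, h.1.2⟩⟩
  simp only [eraseEdges]
  rw [filter_comm, sum_filter_ne_zero, hP', card_filter, ← sum_add_distrib]
  refine sum_congr rfl fun e he => Nat.sub_add_cancel ?_
  have := hd e (mem_filter.1 he).1
  split_ifs <;> omega

lemma IsConn.exists_reflTransGen_frontier (hG : G.IsConn A Ω) (ha : a ∈ A) :
    ∃ v ∈ frontier Ω, ReflTransGen (fun x y => (x, y) ∈ G.E) a v := by
  by_contra! hfr
  obtain ⟨hAV, -, hEV, -, -, hbal⟩ := hG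
  set S := {v ∈ G.V | ReflTransGen (fun x y => (x, y) ∈ G.E) a v}
  have hclosed : {e ∈ G.E | e.1 ∈ S} ⊆ {e ∈ G.E | e.2 ∈ S} := by
    intro e he
    obtain ⟨he, hS⟩ := mem_filter.1 he
    exact mem_filter.2 ⟨he, mem_filter.2 ⟨(hEV e he).2.1, (mem_filter.1 hS).2.tail he⟩⟩
  have hsum : ∑ v ∈ S, ∑ e ∈ G.E with e.1 = v, G.d e =
      ∑ v ∈ S, ∑ e ∈ G.E with e.2 = v, G.d e + ∑ v ∈ S, (if v ∈ A then 1 else 0) := by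
    rw [← sum_add_distrib]
    refine sum_congr rfl fun v hv => ?_
    obtain ⟨hvV, hav⟩ := mem_filter.1 hv
    exact hbal v hvV fun hv => hfr v hv hav
  have hsource : 1 ≤ ∑ v ∈ S, (if v ∈ A then 1 else 0) :=
    calc 1 = (if a ∈ A then 1 else 0) := (if_pos ha).symm
      _ ≤ _ := single_le_sum (f := fun v => if v ∈ A then 1 else 0) (fun _ _ => Nat.zero_le _)
          (mem_filter.2 ⟨hAV ha, ReflTransGen.refl⟩)
  rw [sum_fiberwise_eq_sum_filter, sum_fiberwise_eq_sum_filter] at hsum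
  have := sum_le_sum_of_subset (f := G.d) hclosed
  omega

lemma IsConn.exists_path_to_frontier (hΩ : IsOpen Ω) (hG : G.IsConn A Ω) (ha : a ∈ A)
    (haΩ : a ∈ Ω) :
    ∃ (n : ℕ) (b : ℕ → Pt m), 1 ≤ n ∧ b 0 = a ∧ b n ∈ frontier Ω ∧
      (∀ i < n, (b i, b (i + 1)) ∈ G.E) ∧ Set.InjOn b (Set.Iic n) := by
  obtain ⟨v, hv, hav⟩ := hG.exists_reflTransGen_frontier ha
  obtain ⟨n, b, hb0, hbn, hE, hinj⟩ := exists_injOn_chain_of_reflTransGen hav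
  refine ⟨n, b, Nat.one_le_iff_ne_zero.2 ?_, hb0, hbn ▸ hv, hE, hinj⟩
  rintro rfl
  exact (disjoint_frontier_iff_isOpen.2 hΩ).ne_of_mem hv haΩ (hbn.symm.trans hb0)

lemma IsConn.eraseEdges_pathEdges (hG : G.IsConn A Ω) (ha : a ∈ A) {n : ℕ} {b : ℕ → Pt m}
    (hb0 : b 0 = a) (hbn : b n ∈ frontier Ω) (hE : ∀ i < n, (b i, b (i + 1)) ∈ G.E)
    (hinj : Set.InjOn b (Set.Iic n)) :
    (G.eraseEdges (pathEdges b n)).IsConn (A.erase a) Ω := by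
  obtain ⟨hAV, hVΩ, hEV, hanti, hd, hbal⟩ := hG
  have hPE := pathEdges_subset hE
  have hsub := eraseEdges_E_subset (G := G) (pathEdges b n)
  refine ⟨(erase_subset a A).trans hAV, hVΩ, fun e he => hEV e (hsub he),
    fun e he he' => hanti e (hsub he) (hsub he'),
    fun e he => Nat.one_le_iff_ne_zero.2 (mem_filter.1 he).2, fun v hv hvΩ => ?_⟩
  have hout := sum_filter_eraseEdges_add hPE hd Prod.fst v
  have hin := sum_filter_eraseEdges_add hPE hd Prod.snd v
  rw [card_filter_pathEdges hinj Prod.fst] at hout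
  rw [card_filter_pathEdges hinj Prod.snd] at hin
  have hpath := card_filter_range_add_ite b n v
  rw [if_neg (show b n ≠ v from fun h => hvΩ (h ▸ hbn)), hb0] at hpath
  have hA : (if v ∈ A then 1 else 0) =
      (if v ∈ A.erase a then 1 else 0) + if a = v then 1 else 0 := by
    by_cases hva : a = v
    · simp [← hva, ha]
    · simp [hva, Ne.symm hva]
  have := hbal v hv hvΩ
  dsimp only at hout hin
  omega

lemma IsConn.exists_paths (hΩ : IsOpen Ω) (hA : (A : Set (Pt m)) ⊆ Ω) (hG : G.IsConn A Ω) :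
    ∃ (q : Pt m → ℕ) (b : Pt m → ℕ → Pt m) (T₀ : BrGraph m),
      (∀ a ∈ A, 1 ≤ q a ∧ b a 0 = a ∧ b a (q a) ∈ frontier Ω ∧
        (∀ i < q a, (b a i, b a (i + 1)) ∈ G.E) ∧ Set.InjOn (b a) (Set.Iic (q a))) ∧
      T₀.IsConn ∅ Ω ∧ T₀.E ⊆ G.E ∧
      ∀ e, G.mult e = T₀.mult e + #{a ∈ A | e ∈ pathEdges (b a) (q a)} := by
  induction A using Finset.induction_on generalizing G with
  | empty => exact ⟨0, fun x _ => x, G, by simp, hG, subset_rfl, by simp⟩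
  | @insert a s has ih =>
    have ha := mem_insert_self a s
    obtain ⟨n, p, hn, hp0, hpn, hpE, hpinj⟩ := hG.exists_path_to_frontier hΩ ha (hA ha)
    have hG' := hG.eraseEdges_pathEdges ha hp0 hpn hpE hpinj
    rw [erase_insert has] at hG'
    obtain ⟨q, b, T₀, hpaths, hT₀, hT₀E, hmult⟩ :=
      ih (fun x hx => hA (mem_insert_of_mem hx)) hG'
    have hne : ∀ x ∈ s, x ≠ a := fun x hx => ne_of_mem_of_not_mem hx has
    refine ⟨update q a n, update b a p, T₀, fun x hx => ?_, hT₀,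
      hT₀E.trans (eraseEdges_E_subset _), fun e => ?_⟩
    · rcases mem_insert.1 hx with rfl | hx
      · simpa using ⟨hn, hp0, hpn, hpE, hpinj⟩
      · obtain ⟨h1, h0, hF, hE, hinj⟩ := hpaths x hx
        simp only [update_of_ne (hne x hx)]
        exact ⟨h1, h0, hF, fun i hi => eraseEdges_E_subset _ (hE i hi), hinj⟩
    · have hd : ∀ e ∈ G.E, 1 ≤ G.d e := hG.2.2.2.2.1
      rw [← mult_eraseEdges_add (pathEdges_subset hpE) hd, hmult, card_filter, card_filter,
        sum_insert has, update_self, update_self, add_comm (ite _ _ _), add_assoc]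
      congr 2
      refine sum_congr rfl fun x hx => ?_
      rw [update_of_ne (hne x hx), update_of_ne (hne x hx)]

end BrGraph

theorem statement9_general (m : ℕ) (Ω : Set (Pt m)) (hΩo : IsOpen Ω)
    (A : Finset (Pt m)) (hA : (A : Set (Pt m)) ⊆ Ω)
    (G : BrGraph m) (hG : G.IsConn A Ω) :
    ∃ (q : Pt m → ℕ) (b : Pt m → ℕ → Pt m) (T₀ : BrGraph m),
      (∀ a ∈ A,
        1 ≤ q a ∧ b a 0 = a ∧ b a (q a) ∈ frontier Ω ∧
        (∀ i < q a, (b a i, b a (i + 1)) ∈ G.E) ∧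
        (∀ i ≤ q a, ∀ j ≤ q a, b a i = b a j → i = j)) ∧
      T₀.IsConn ∅ Ω ∧ T₀.E ⊆ G.E ∧
      ∀ e ∈ G.E,
        G.d e = (if e ∈ T₀.E then T₀.d e else 0) +
          Set.ncard {a : Pt m | a ∈ A ∧ ∃ i < q a, e = (b a i, b a (i + 1))} := by
  obtain ⟨q, b, T₀, hpaths, hT₀, hT₀E, hmult⟩ := hG.exists_paths hΩo hA
  refine ⟨q, b, T₀, fun a ha => ?_, hT₀, hT₀E, fun e he => ?_⟩
  · obtain ⟨h1, h0, hF, hE, hinj⟩ := hpaths a ha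
    exact ⟨h1, h0, hF, hE, fun i hi j hj => @hinj i hi j hj⟩
  · have h := hmult e
    simp only [BrGraph.mult, if_pos he] at h
    rw [h, ← coe_filter, Set.ncard_coe_finset]
    simp only [mem_pathEdges]

/-- Decomposition of a graph `G ∈ 𝒢(A, ∂Ω)` into threads and loops: for each `a ∈ A`
there is a finite sequence of distinct points `a = b^a_0, …, b^a_{q_a}` ending on `∂Ω`
whose consecutive pairs are edges of `G`, and there is a weighted graph `T₀ ∈ 𝒢(∅, ∂Ω)`
with `E(T₀) ⊆ E(G)` such that for every edge `e` of `G`,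
`d_G(e) = d_{T₀}(e) + #{a ∈ A : e is one of the consecutive pairs of the thread of a}`,
where `d_{T₀}(e) = 0` if `e ∉ E(T₀)`. -/
theorem statement9 (m : ℕ) (Ω : Set (Pt m)) (hΩo : IsOpen Ω) (hΩb : Bornology.IsBounded Ω)
    (A : Finset (Pt m)) (hA : (A : Set (Pt m)) ⊆ Ω)
    (G : BrGraph m) (hG : G.IsConn A Ω) :
    ∃ (q : Pt m → ℕ) (b : Pt m → ℕ → Pt m) (T₀ : BrGraph m),
      (∀ a ∈ A,
        1 ≤ q a ∧ b a 0 = a ∧ b a (q a) ∈ frontier Ω ∧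
        (∀ i < q a, (b a i, b a (i + 1)) ∈ G.E) ∧
        (∀ i ≤ q a, ∀ j ≤ q a, b a i = b a j → i = j)) ∧
      T₀.IsConn ∅ Ω ∧ T₀.E ⊆ G.E ∧
      ∀ e ∈ G.E,
        G.d e = (if e ∈ T₀.E then T₀.d e else 0) +
          Set.ncard {a : Pt m | a ∈ A ∧ ∃ i < q a, e = (b a i, b a (i + 1))} :=
  statement9_general m Ω hΩo A hA G hG
end
end

section
/- Let m ≥ 1 be an integer and let α ∈ (1 − 1/m, 1]. For every bounded convex open set Ω ⊆ ℝ^m there exists a constant C(Ω, α) > 0 such that for every finite set A ⊆ Ω one has ℒ^α_brbd(A, ∂Ω) ≤ C(Ω, α) · (#A)^α. -/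
/-!
Put `A` in a cube of side `s` and argue by dyadic recursion. Split the cube into its `2^m`
half-size subcubes, connect the points of each subcube `Q` to a root of `Q`, and join every
such root to one chosen root by a single edge of multiplicity `#(A ∩ Q)` and length at most
`√m s`. By concavity of `t ↦ t^α`, `∑_Q #(A ∩ Q)^α ≤ (2^m)^(1-α) (#A)^α`, and
`(2^m)^(1-α) < 2` exactly when `α > 1 - 1/m`; hence the bound `K s (#A)^α` reproduces itself
from scale `s/2` to scale `s` for a suitable `K`. The recursion stops once the subcubes separate
the points of `A`. Finally the root is joined to a point of `∂Ω`, at cost `(#A)^α diam Ω`.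
-/

open scoped ENNReal
open scoped Classical

noncomputable section

open Finset

namespace BrGraph

variable {m : ℕ}

def outflow (G : BrGraph m) (a : Pt m) : ℕ := ∑ e ∈ G.E.filter (fun e => e.1 = a), G.d e

def inflow (G : BrGraph m) (a : Pt m) : ℕ := ∑ e ∈ G.E.filter (fun e => e.2 = a), G.d e

/-- `G` carries one unit of mass from every point of `B` to the root `r ∈ B`. -/
structure IsFlowTo (G : BrGraph m) (B : Finset (Pt m)) (r : Pt m) : Prop where
  V_eq : G.V = B
  root_mem : r ∈ B
  mem_of_mem_E : ∀ e ∈ G.E, e.1 ∈ B ∧ e.2 ∈ B ∧ e.1 ≠ e.2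
  swap_notMem_E : ∀ e ∈ G.E, (e.2, e.1) ∉ G.E
  one_le_d : ∀ e ∈ G.E, 1 ≤ G.d e
  outflow_root : G.outflow r = 0
  outflow_eq : ∀ a ∈ B, a ≠ r → G.outflow a = G.inflow a + 1
  inflow_root : G.inflow r + 1 = B.card

def point (b : Pt m) : BrGraph m := ⟨{b}, ∅, fun _ => 0⟩

theorem isFlowTo_point (b : Pt m) : (point b).IsFlowTo {b} b where
  V_eq := rfl
  root_mem := mem_singleton_self b
  mem_of_mem_E := by simp [point]
  swap_notMem_E := by simp [point]
  one_le_d := by simp [point]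
  outflow_root := by simp [point, outflow]
  outflow_eq := by simp
  inflow_root := by simp [point, inflow]

@[simp]
theorem cost_point (α : ℝ) (b : Pt m) : (point b).cost α = 0 := by
  simp [point, cost]

def join (G₁ G₂ : BrGraph m) (e : Pt m × Pt m) (n : ℕ) : BrGraph m where
  V := G₁.V ∪ G₂.V
  E := insert e (G₁.E ∪ G₂.E)
  d x := if x = e then n else if x ∈ G₁.E then G₁.d x else G₂.d x

section join

variable {G₁ G₂ : BrGraph m} {e : Pt m × Pt m} {n : ℕ}

theorem d_join_of_mem_left (he : e ∉ G₁.E ∪ G₂.E) {x : Pt m × Pt m} (hx : x ∈ G₁.E) :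
    (G₁.join G₂ e n).d x = G₁.d x := by
  have hxe : x ≠ e := fun h => he (h ▸ mem_union_left _ hx)
  simp [join, hxe, hx]

theorem d_join_of_mem_right (hE : Disjoint G₁.E G₂.E) (he : e ∉ G₁.E ∪ G₂.E)
    {x : Pt m × Pt m} (hx : x ∈ G₂.E) : (G₁.join G₂ e n).d x = G₂.d x := by
  have hxe : x ≠ e := fun h => he (h ▸ mem_union_right _ hx)
  simp [join, hxe, disjoint_right.1 hE hx]

theorem sum_join {M : Type*} [AddCommMonoid M] (hE : Disjoint G₁.E G₂.E)
    (he : e ∉ G₁.E ∪ G₂.E) (F : Pt m × Pt m → ℕ → M) :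
    ∑ x ∈ (G₁.join G₂ e n).E, F x ((G₁.join G₂ e n).d x) =
      F e n + (∑ x ∈ G₁.E, F x (G₁.d x) + ∑ x ∈ G₂.E, F x (G₂.d x)) := by
  change ∑ x ∈ insert e (G₁.E ∪ G₂.E), _ = _
  rw [sum_insert he, sum_union hE]
  congr 1
  · simp [join]
  · congr 1 <;> refine sum_congr rfl fun x hx => ?_
    · rw [d_join_of_mem_left he hx]
    · rw [d_join_of_mem_right hE he hx]

theorem outflow_join (hE : Disjoint G₁.E G₂.E) (he : e ∉ G₁.E ∪ G₂.E) (a : Pt m) :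
    (G₁.join G₂ e n).outflow a =
      (if e.1 = a then n else 0) + (G₁.outflow a + G₂.outflow a) := by
  simp only [outflow, sum_filter]
  exact sum_join hE he fun x k => if x.1 = a then k else 0

theorem inflow_join (hE : Disjoint G₁.E G₂.E) (he : e ∉ G₁.E ∪ G₂.E) (a : Pt m) :
    (G₁.join G₂ e n).inflow a =
      (if e.2 = a then n else 0) + (G₁.inflow a + G₂.inflow a) := by
  simp only [inflow, sum_filter]
  exact sum_join hE he fun x k => if x.2 = a then k else 0

theorem cost_join (hE : Disjoint G₁.E G₂.E) (he : e ∉ G₁.E ∪ G₂.E) (α : ℝ) :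
    (G₁.join G₂ e n).cost α =
      (n : ℝ) ^ α * ‖e.2 - e.1‖ + (G₁.cost α + G₂.cost α) :=
  sum_join hE he fun x k => (k : ℝ) ^ α * ‖x.2 - x.1‖

end join

namespace IsFlowTo

variable {G G₁ G₂ : BrGraph m} {B B₁ B₂ : Finset (Pt m)} {r r₁ r₂ a : Pt m}

theorem outflow_eq_zero (h : G.IsFlowTo B r) (ha : a ∉ B) : G.outflow a = 0 :=
  sum_eq_zero fun e he => by
    obtain ⟨hE, rfl⟩ := mem_filter.1 he
    exact absurd (h.mem_of_mem_E e hE).1 ha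

theorem inflow_eq_zero (h : G.IsFlowTo B r) (ha : a ∉ B) : G.inflow a = 0 :=
  sum_eq_zero fun e he => by
    obtain ⟨hE, rfl⟩ := mem_filter.1 he
    exact absurd (h.mem_of_mem_E e hE).2.1 ha

section join

variable (h₁ : G₁.IsFlowTo B₁ r₁) (h₂ : G₂.IsFlowTo B₂ r₂) (hB : Disjoint B₁ B₂)
include h₁ h₂ hB

theorem disjoint_E : Disjoint G₁.E G₂.E :=
  disjoint_left.2 fun e he₁ he₂ =>
    disjoint_left.1 hB (h₁.mem_of_mem_E e he₁).1 (h₂.mem_of_mem_E e he₂).1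

theorem notMem_E_union : (r₂, r₁) ∉ G₁.E ∪ G₂.E := by
  intro he
  rcases mem_union.1 he with he | he
  · exact disjoint_right.1 hB h₂.root_mem (h₁.mem_of_mem_E _ he).1
  · exact disjoint_left.1 hB h₁.root_mem (h₂.mem_of_mem_E _ he).2.1

theorem outflow_join_eq (ha : a ∈ B₁ ∪ B₂) (har : a ≠ r₁) :
    (G₁.join G₂ (r₂, r₁) B₂.card).outflow a =
      (G₁.join G₂ (r₂, r₁) B₂.card).inflow a + 1 := by
  have hE := h₁.disjoint_E h₂ hB
  have hnew := h₁.notMem_E_union h₂ hB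
  rw [outflow_join hE hnew, inflow_join hE hnew, if_neg (Ne.symm har)]
  dsimp only
  rcases mem_union.1 ha with ha | ha
  · have ha₂ : a ∉ B₂ := disjoint_left.1 hB ha
    have har₂ : r₂ ≠ a := by rintro rfl; exact disjoint_left.1 hB ha h₂.root_mem
    rw [if_neg har₂, h₁.outflow_eq a ha har, h₂.outflow_eq_zero ha₂,
      h₂.inflow_eq_zero ha₂]
    omega
  · have ha₁ : a ∉ B₁ := disjoint_right.1 hB ha
    rw [h₁.outflow_eq_zero ha₁, h₁.inflow_eq_zero ha₁]
    by_cases har₂ : r₂ = a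
    · subst har₂
      rw [if_pos rfl, h₂.outflow_root]
      have := h₂.inflow_root
      omega
    · rw [if_neg har₂, h₂.outflow_eq a ha (Ne.symm har₂)]
      omega

theorem join : (G₁.join G₂ (r₂, r₁) B₂.card).IsFlowTo (B₁ ∪ B₂) r₁ := by
  have hE := h₁.disjoint_E h₂ hB
  have hnew := h₁.notMem_E_union h₂ hB
  have hr₁ : r₁ ∉ B₂ := disjoint_left.1 hB h₁.root_mem
  have hr₂ : r₂ ∉ B₁ := disjoint_right.1 hB h₂.root_mem
  have hr : r₂ ≠ r₁ := fun h => hr₂ (h ▸ h₁.root_mem)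
  refine ⟨by simp [BrGraph.join, h₁.V_eq, h₂.V_eq], mem_union_left _ h₁.root_mem,
    ?_, ?_, ?_, ?_, fun _ => h₁.outflow_join_eq h₂ hB, ?_⟩
  · intro e he
    rcases mem_insert.1 he with rfl | he
    · exact ⟨mem_union_right _ h₂.root_mem, mem_union_left _ h₁.root_mem, hr⟩
    rcases mem_union.1 he with he | he
    · obtain ⟨h1, h2, h3⟩ := h₁.mem_of_mem_E e he
      exact ⟨mem_union_left _ h1, mem_union_left _ h2, h3⟩
    · obtain ⟨h1, h2, h3⟩ := h₂.mem_of_mem_E e he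
      exact ⟨mem_union_right _ h1, mem_union_right _ h2, h3⟩
  · intro e he hs
    have := h₁.mem_of_mem_E
    have := h₂.mem_of_mem_E
    have := h₁.swap_notMem_E
    have := h₂.swap_notMem_E
    have := disjoint_left.1 hB
    simp only [BrGraph.join, mem_insert, mem_union] at he hs
    grind
  · intro e he
    rcases mem_insert.1 he with rfl | he
    · simpa [BrGraph.join] using card_pos.2 ⟨r₂, h₂.root_mem⟩
    rcases mem_union.1 he with he | he
    · rw [d_join_of_mem_left hnew he]
      exact h₁.one_le_d e he
    · rw [d_join_of_mem_right hE hnew he]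
      exact h₂.one_le_d e he
  · rw [outflow_join hE hnew, h₁.outflow_root, h₂.outflow_eq_zero hr₁, if_neg hr]
  · rw [inflow_join hE hnew, if_pos rfl, h₂.inflow_eq_zero hr₁, card_union_of_disjoint hB]
    have := h₁.inflow_root
    omega

theorem cost_join (α : ℝ) :
    (G₁.join G₂ (r₂, r₁) B₂.card).cost α =
      (B₂.card : ℝ) ^ α * ‖r₁ - r₂‖ + (G₁.cost α + G₂.cost α) :=
  BrGraph.cost_join (h₁.disjoint_E h₂ hB) (h₁.notMem_E_union h₂ hB) α

end join

end IsFlowTo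

theorem exists_isFlowTo_biUnion {ι : Type*} {α D : ℝ} {I : Finset ι} {B : ι → Finset (Pt m)}
    (c : ι → ℝ) (hI : I.Nonempty) (hB : (I : Set ι).PairwiseDisjoint B)
    (hD : ∀ x ∈ I.biUnion B, ∀ y ∈ I.biUnion B, ‖x - y‖ ≤ D)
    (hG : ∀ i ∈ I, ∃ (G : BrGraph m) (r : Pt m), G.IsFlowTo (B i) r ∧ G.cost α ≤ c i) :
    ∃ (G : BrGraph m) (r : Pt m), G.IsFlowTo (I.biUnion B) r ∧
      G.cost α ≤ ∑ i ∈ I, c i + D * ∑ i ∈ I, ((B i).card : ℝ) ^ α := by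
  induction hI using Finset.Nonempty.cons_induction with
  | singleton i =>
    obtain ⟨G, r, hGr, hc⟩ := hG i (mem_singleton_self i)
    have hD₀ : 0 ≤ D := by
      simpa using hD r (by simpa using hGr.root_mem) r (by simpa using hGr.root_mem)
    refine ⟨G, r, by simpa using hGr, ?_⟩
    simp only [sum_singleton]
    nlinarith [Real.rpow_nonneg ((B i).card.cast_nonneg (α := ℝ)) α]
  | cons i I hi hI ih =>
    have hunion : (cons i I hi).biUnion B = I.biUnion B ∪ B i := by
      rw [cons_eq_insert, biUnion_insert, union_comm]
    have hdisj : Disjoint (I.biUnion B) (B i) := (disjoint_biUnion_left _ _ _).2 fun j hj =>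
      hB (by simp [hj]) (by simp) (by rintro rfl; exact hi hj)
    rw [hunion] at hD ⊢
    obtain ⟨G₁, r₁, h₁, hc₁⟩ := ih (hB.subset (by simp))
      (fun x hx y hy => hD x (mem_union_left _ hx) y (mem_union_left _ hy))
      (fun j hj => hG j (mem_cons_of_mem hj))
    obtain ⟨G₂, r₂, h₂, hc₂⟩ := hG i (mem_cons_self i I)
    refine ⟨_, r₁, h₁.join h₂ hdisj, ?_⟩
    have hr : ‖r₁ - r₂‖ ≤ D :=
      hD _ (mem_union_left _ h₁.root_mem) _ (mem_union_right _ h₂.root_mem)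
    have hcard := Real.rpow_nonneg ((B i).card.cast_nonneg (α := ℝ)) α
    rw [h₁.cost_join h₂ hdisj, sum_cons, sum_cons]
    nlinarith

end BrGraph

theorem sum_rpow_le_card_rpow_mul_rpow_sum {ι : Type*} (I : Finset ι) {a : ι → ℝ}
    (ha : ∀ i ∈ I, 0 ≤ a i) {α : ℝ} (hα₀ : 0 ≤ α) (hα₁ : α ≤ 1) :
    ∑ i ∈ I, a i ^ α ≤ (I.card : ℝ) ^ (1 - α) * (∑ i ∈ I, a i) ^ α := by
  rcases I.eq_empty_or_nonempty with rfl | hI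
  · simp only [sum_empty, card_empty, Nat.cast_zero]
    positivity
  set N : ℝ := (I.card : ℝ)
  have hN : 0 < N := by simpa [N] using hI.card_pos
  have jensen : ∑ i ∈ I, N⁻¹ • a i ^ α ≤ (∑ i ∈ I, N⁻¹ • a i) ^ α :=
    (Real.concaveOn_rpow hα₀ hα₁).le_map_sum (fun _ _ => by positivity)
      (by simp [N, hN.ne']) ha
  simp only [smul_eq_mul, ← mul_sum] at jensen
  rw [Real.mul_rpow (by positivity) (sum_nonneg ha)] at jensen
  calc ∑ i ∈ I, a i ^ α = N * (N⁻¹ * ∑ i ∈ I, a i ^ α) := by field_simp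
    _ ≤ N * (N⁻¹ ^ α * (∑ i ∈ I, a i) ^ α) := by gcongr
    _ = N ^ (1 - α) * (∑ i ∈ I, a i) ^ α := by
      rw [Real.inv_rpow hN.le, Real.rpow_sub hN, Real.rpow_one]
      field_simp

theorem sum_card_fiber_rpow_le {ι κ : Type*} [Fintype κ] [DecidableEq κ] (s : Finset ι)
    (f : ι → κ) {α : ℝ} (hα₀ : 0 ≤ α) (hα₁ : α ≤ 1) :
    ∑ k ∈ s.image f, ((s.filter (f · = k)).card : ℝ) ^ α ≤
      (Fintype.card κ : ℝ) ^ (1 - α) * (s.card : ℝ) ^ α := by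
  calc ∑ k ∈ s.image f, ((s.filter (f · = k)).card : ℝ) ^ α
      ≤ ((s.image f).card : ℝ) ^ (1 - α) *
          (∑ k ∈ s.image f, ((s.filter (f · = k)).card : ℝ)) ^ α :=
        sum_rpow_le_card_rpow_mul_rpow_sum _ (fun _ _ => Nat.cast_nonneg _) hα₀ hα₁
    _ ≤ (Fintype.card κ : ℝ) ^ (1 - α) * (s.card : ℝ) ^ α := by
      rw [← Nat.cast_sum, ← card_eq_sum_card_image]
      gcongr
      exact card_le_univ _

section cube

variable {m : ℕ}

def cube (c : Pt m) (s : ℝ) : Set (Pt m) := {x | ∀ i, c i ≤ x i ∧ x i < c i + s}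

def subcubeIndex (c : Pt m) (s : ℝ) (x : Pt m) : Fin m → Bool :=
  fun i => decide (c i + s / 2 ≤ x i)

def subcubeCorner (c : Pt m) (s : ℝ) (f : Fin m → Bool) : Pt m :=
  WithLp.toLp 2 fun i => if f i then c i + s / 2 else c i

variable {c x y : Pt m} {s : ℝ}

theorem mem_cube_subcubeCorner (hx : x ∈ cube c s) :
    x ∈ cube (subcubeCorner c s (subcubeIndex c s x)) (s / 2) := by
  intro i
  obtain ⟨h₁, h₂⟩ := hx i
  by_cases h : c i + s / 2 ≤ x i
  · simp only [subcubeCorner, subcubeIndex, decide_eq_true h, if_true]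
    exact ⟨h, by linarith⟩
  · simp only [subcubeCorner, subcubeIndex, decide_eq_false h, Bool.false_eq_true, if_false]
    exact ⟨h₁, by linarith⟩

theorem abs_sub_lt_of_mem_cube (hx : x ∈ cube c s) (hy : y ∈ cube c s) (i : Fin m) :
    |x i - y i| < s := by
  have := hx i
  have := hy i
  rw [abs_sub_lt_iff]
  constructor <;> linarith

theorem exists_eq_singleton_of_subset_cube {B : Finset (Pt m)} (hB : B.Nonempty)
    (hBc : ↑B ⊆ cube c s) (hsep : (B : Set (Pt m)).Pairwise fun x y => ∃ i, s ≤ |x i - y i|) :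
    ∃ r, B = {r} := by
  refine hB.exists_eq_singleton_or_nontrivial.resolve_right fun ⟨x, hx, y, hy, hxy⟩ => ?_
  obtain ⟨i, hi⟩ := hsep hx hy hxy
  exact (abs_sub_lt_of_mem_cube (hBc hx) (hBc hy) i).not_ge hi

theorem norm_sub_le_of_mem_cube (hs : 0 ≤ s) (hx : x ∈ cube c s) (hy : y ∈ cube c s) :
    ‖x - y‖ ≤ √m * s := by
  rw [EuclideanSpace.norm_eq, ← Real.sqrt_sq hs, ← Real.sqrt_mul (Nat.cast_nonneg m)]
  gcongr
  calc ∑ i, ‖(x - y) i‖ ^ 2 ≤ ∑ _i : Fin m, s ^ 2 := by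
        gcongr with i
        simpa using (abs_sub_lt_of_mem_cube hx hy i).le
    _ = m * s ^ 2 := by simp

theorem closedBall_subset_cube (R : ℝ) :
    Metric.closedBall (0 : Pt m) R ⊆ cube (WithLp.toLp 2 fun _ => -R) (2 * R + 1) := by
  intro x hx i
  have := (abs_le.1 ((Real.norm_eq_abs _).symm.trans_le
    ((PiLp.norm_apply_le x i).trans (mem_closedBall_zero_iff.1 hx))))
  constructor <;> linarith

end cube

namespace BrGraph

variable {m : ℕ}

theorem exists_isFlowTo_cost_le_of_subset_cube {α K : ℝ} (hα₀ : 0 ≤ α) (hα₁ : α ≤ 1)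
    (hK₀ : 0 ≤ K) (hK : (√m + K / 2) * ((2 : ℝ) ^ m) ^ (1 - α) ≤ K) (k : ℕ) :
    ∀ {c : Pt m} {s : ℝ} {B : Finset (Pt m)}, 0 < s → B.Nonempty → ↑B ⊆ cube c s →
      (B : Set (Pt m)).Pairwise (fun x y => ∃ i, s / 2 ^ k ≤ |x i - y i|) →
      ∃ (G : BrGraph m) (r : Pt m),
        G.IsFlowTo B r ∧ G.cost α ≤ K * s * (B.card : ℝ) ^ α := by
  induction k with
  | zero =>
    intro c s B hs hB hBc hsep
    simp only [pow_zero, div_one] at hsep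
    obtain ⟨r, rfl⟩ := exists_eq_singleton_of_subset_cube hB hBc hsep
    refine ⟨point r, r, isFlowTo_point r, ?_⟩
    simp only [cost_point, card_singleton, Nat.cast_one, Real.one_rpow, mul_one]
    positivity
  | succ k ih =>
    intro c s B hs hB hBc hsep
    set σ := subcubeIndex c s
    have hpieces : ∀ f ∈ B.image σ, ∃ (G : BrGraph m) (r : Pt m),
        G.IsFlowTo (B.filter (σ · = f)) r ∧
          G.cost α ≤ K * (s / 2) * ((B.filter (σ · = f)).card : ℝ) ^ α := by
      intro f hf
      obtain ⟨x, hx, rfl⟩ := mem_image.1 hf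
      refine ih (c := subcubeCorner c s (σ x)) (by positivity) ⟨x, by simp [hx]⟩ ?_ ?_
      · intro y hy
        obtain ⟨hyB, hyx⟩ := mem_filter.1 hy
        rw [← hyx]
        exact mem_cube_subcubeCorner (hBc hyB)
      · rw [div_div, ← pow_succ']
        exact hsep.mono (coe_subset.2 (filter_subset _ _))
    have hdiam : ∀ x ∈ (B.image σ).biUnion (fun f => B.filter (σ · = f)),
        ∀ y ∈ (B.image σ).biUnion (fun f => B.filter (σ · = f)),
          ‖x - y‖ ≤ √m * s := by
      simp only [image_biUnion_filter_eq]
      exact fun x hx y hy => norm_sub_le_of_mem_cube hs.le (hBc hx) (hBc hy)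
    obtain ⟨G, r, hG, hcost⟩ := exists_isFlowTo_biUnion _ (hB.image σ)
      (Set.pairwiseDisjoint_filter σ _ B) hdiam hpieces
    rw [image_biUnion_filter_eq] at hG
    refine ⟨G, r, hG, ?_⟩
    have hfib := sum_card_fiber_rpow_le B σ hα₀ hα₁
    simp only [Fintype.card_fun, Fintype.card_bool, Fintype.card_fin, Nat.cast_pow,
      Nat.cast_ofNat] at hfib
    calc G.cost α
        ≤ ∑ f ∈ B.image σ, K * (s / 2) * ((B.filter (σ · = f)).card : ℝ) ^ α +
          √m * s * ∑ f ∈ B.image σ, ((B.filter (σ · = f)).card : ℝ) ^ α := hcost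
      _ = (√m + K / 2) * s * ∑ f ∈ B.image σ, ((B.filter (σ · = f)).card : ℝ) ^ α := by
        rw [← mul_sum]
        ring
      _ ≤ (√m + K / 2) * s * (((2 : ℝ) ^ m) ^ (1 - α) * (B.card : ℝ) ^ α) := by gcongr
      _ = (√m + K / 2) * ((2 : ℝ) ^ m) ^ (1 - α) * s * (B.card : ℝ) ^ α := by ring
      _ ≤ K * s * (B.card : ℝ) ^ α := by gcongr

end BrGraph

theorem two_pow_rpow_lt_two {m : ℕ} {α : ℝ} (hα : 1 - 1 / (m : ℝ) < α) :
    ((2 : ℝ) ^ m) ^ (1 - α) < 2 := by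
  have hexp : (m : ℝ) * (1 - α) < 1 := by
    rcases (Nat.cast_nonneg m : (0 : ℝ) ≤ m).eq_or_lt with h | h
    · simp [← h]
    · have := (lt_div_iff₀ h).1 (by linarith : 1 - α < 1 / (m : ℝ))
      linarith
  rw [← Real.rpow_natCast, ← Real.rpow_mul zero_le_two]
  simpa using Real.rpow_lt_rpow_of_exponent_lt one_lt_two hexp

theorem exists_nonneg_add_half_mul_le_self {a β : ℝ} (ha : 0 ≤ a) (hβ₀ : 0 ≤ β)
    (hβ : β < 2) :
    ∃ K : ℝ, 0 ≤ K ∧ (a + K / 2) * β ≤ K := by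
  have : 0 < 2 - β := by linarith
  refine ⟨2 * a * β / (2 - β), by positivity, le_of_eq ?_⟩
  field_simp
  ring

open Filter Topology in
theorem exists_pairwise_le_abs_sub {m : ℕ} (B : Finset (Pt m)) (s : ℝ) :
    ∃ k : ℕ, (B : Set (Pt m)).Pairwise fun x y => ∃ i, s / 2 ^ k ≤ |x i - y i| := by
  have hpair : ∀ p ∈ B ×ˢ B,
      ∀ᶠ k : ℕ in atTop, p.1 ≠ p.2 → ∃ i, s / 2 ^ k ≤ |p.1 i - p.2 i| := by
    rintro ⟨x, y⟩ -
    by_cases hxy : x = y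
    · simp [hxy]
    obtain ⟨i, hi⟩ : ∃ i, x i ≠ y i := by
      by_contra! h
      exact hxy (PiLp.ext h)
    have hlim : Tendsto (fun k : ℕ => s / 2 ^ k) atTop (𝓝 0) :=
      tendsto_const_nhds.div_atTop (tendsto_pow_atTop_atTop_of_one_lt one_lt_two)
    filter_upwards [hlim.eventually (ge_mem_nhds (abs_pos.2 (sub_ne_zero.2 hi)))] with k hk _
    exact ⟨i, hk⟩
  obtain ⟨k, hk⟩ := ((eventually_all_finset _).2 hpair).exists
  exact ⟨k, fun x hx y hy hxy => hk (x, y) (mem_product.2 ⟨hx, hy⟩) hxy⟩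

section boundary

variable {m : ℕ} {α : ℝ} {G : BrGraph m} {A : Finset (Pt m)} {Ω : Set (Pt m)} {r b : Pt m}

theorem Lbrbd_le_cost (hG : G.IsConn A Ω) : Lbrbd m α A Ω ≤ ENNReal.ofReal (G.cost α) :=
  iInf₂_le G hG

theorem Lbrbd_empty : Lbrbd m α ∅ Ω = 0 := by
  refine le_antisymm ((Lbrbd_le_cost (G := ⟨∅, ∅, fun _ => 0⟩) ?_).trans_eq ?_) zero_le
  · refine ⟨subset_refl _, ?_, ?_, ?_, ?_, ?_⟩ <;> simp
  · simp [BrGraph.cost]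

theorem BrGraph.IsFlowTo.isConn (h : G.IsFlowTo (insert b A) b) (hb : b ∈ frontier Ω)
    (hA : ↑A ⊆ closure Ω) : G.IsConn A Ω := by
  refine ⟨h.V_eq ▸ subset_insert _ _, ?_, fun e he => h.V_eq ▸ h.mem_of_mem_E e he,
    h.swap_notMem_E, h.one_le_d, fun a ha haΩ => ?_⟩
  · rw [h.V_eq, coe_insert]
    exact Set.insert_subset (frontier_subset_closure hb) hA
  · rw [h.V_eq] at ha
    have hab : a ≠ b := fun hab => haΩ (hab ▸ hb)
    rw [if_pos ((mem_insert.1 ha).resolve_left hab)]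
    exact h.outflow_eq a ha hab

theorem Lbrbd_le_cost_add_of_isFlowTo (hG : G.IsFlowTo A r) (hΩ : IsOpen Ω) (hA : ↑A ⊆ Ω)
    (hb : b ∈ frontier Ω) :
    Lbrbd m α A Ω ≤ ENNReal.ofReal (G.cost α + (A.card : ℝ) ^ α * ‖b - r‖) := by
  have hbA : Disjoint {b} A :=
    disjoint_singleton_left.2 fun h => hΩ.inter_frontier_eq.subset ⟨hA h, hb⟩
  have hjoin := (BrGraph.isFlowTo_point b).join hG hbA
  rw [← insert_eq] at hjoin
  refine (Lbrbd_le_cost (hjoin.isConn hb (hA.trans subset_closure))).trans_eq ?_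
  rw [(BrGraph.isFlowTo_point b).cost_join hG hbA, BrGraph.cost_point]
  ring_nf

end boundary

theorem statement11_general (m : ℕ) (hm : 1 ≤ m) (α : ℝ)
    (hαl : 1 - 1 / (m : ℝ) < α) (hα1 : α ≤ 1)
    (Ω : Set (Pt m)) (hΩo : IsOpen Ω) (hΩb : Bornology.IsBounded Ω) :
    ∃ C : ℝ, 0 < C ∧
      ∀ A : Finset (Pt m), (A : Set (Pt m)) ⊆ Ω →
        Lbrbd m α A Ω ≤ ENNReal.ofReal (C * (A.card : ℝ) ^ α) := by
  have hα₀ : 0 ≤ α := by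
    have : 1 / (m : ℝ) ≤ 1 := div_le_one_of_le₀ (by exact_mod_cast hm) (Nat.cast_nonneg m)
    linarith
  obtain ⟨K, hK₀, hK⟩ := exists_nonneg_add_half_mul_le_self (Real.sqrt_nonneg m)
    (by positivity) (two_pow_rpow_lt_two hαl)
  obtain ⟨R, hR, hΩR⟩ := hΩb.subset_closedBall_lt 0 (0 : Pt m)
  refine ⟨(K + 1) * (2 * R + 1), by positivity, fun A hA => ?_⟩
  rcases A.eq_empty_or_nonempty with rfl | ⟨a, ha⟩
  · simp [Lbrbd_empty]
  have : Nonempty (Fin m) := ⟨⟨0, hm⟩⟩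
  obtain ⟨b, hb⟩ : (frontier Ω).Nonempty := nonempty_frontier_iff.2
    ⟨⟨a, hA ha⟩, fun h => NormedSpace.unbounded_univ ℝ (Pt m) (h ▸ hΩb)⟩
  obtain ⟨k, hk⟩ := exists_pairwise_le_abs_sub A (2 * R + 1)
  obtain ⟨G, r, hG, hcost⟩ :=
    BrGraph.exists_isFlowTo_cost_le_of_subset_cube hα₀ hα1 hK₀ hK k (by positivity)
      ⟨a, ha⟩ ((hA.trans hΩR).trans (closedBall_subset_cube R)) hk
  have hbr : ‖b - r‖ ≤ 2 * R + 1 := by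
    have hb' := mem_closedBall_zero_iff.1
      (closure_minimal hΩR Metric.isClosed_closedBall (frontier_subset_closure hb))
    have hr' := mem_closedBall_zero_iff.1 (hΩR (hA hG.root_mem))
    linarith [norm_sub_le b r]
  refine (Lbrbd_le_cost_add_of_isFlowTo hG hΩo hA hb).trans (ENNReal.ofReal_le_ofReal ?_)
  have := Real.rpow_nonneg (A.card.cast_nonneg (α := ℝ)) α
  nlinarith

/-- Xia's estimate: for `m ≥ 1` and `α ∈ (1 − 1/m, 1]`, every bounded convex open set
`Ω ⊆ ℝ^m` admits a constant `C(Ω, α) > 0` such that for every finite `A ⊆ Ω`,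
`ℒ^α_brbd(A, ∂Ω) ≤ C(Ω, α)·(#A)^α`. -/
theorem statement11 (m : ℕ) (hm : 1 ≤ m) (α : ℝ)
    (hαl : 1 - 1 / (m : ℝ) < α) (hα1 : α ≤ 1)
    (Ω : Set (Pt m)) (hΩo : IsOpen Ω) (hΩc : Convex ℝ Ω) (hΩb : Bornology.IsBounded Ω) :
    ∃ C : ℝ, 0 < C ∧
      ∀ A : Finset (Pt m), (A : Set (Pt m)) ⊆ Ω →
        Lbrbd m α A Ω ≤ ENNReal.ofReal (C * (A.card : ℝ) ^ α) :=
  statement11_general m hm α hαl hα1 Ω hΩo hΩb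

end
end
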